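/- Adhesive states: Let L, ρ, μ > 0 and let Φ satisfy assumption (A1) with constant κ. There exists ε₀ > 0, depending only on L, μ and κ, with the following property. Suppose u : [0,∞)×[0,L] → ℝ is continuous, ∂_t u and ∂²ₓu exist and are continuous on [0,∞)×[0,L], u(0,·) = u₀ with sup_{x∈[0,L]} |u₀(x)| < 1, the energy dissipation inequality E[u](t) ≤ E[u](0) holds for every t ≥ 0, and E[u](0) < ε₀. Then sup_{(t,x)∈[0,∞)×[0,L]} |u(t,x)| < 1, i.e. the beam never detaches. -/

import Mathlib

/-! A low-energy state is far from detachment: the energy controls `∫ u²` through `Φ ≥ κ u²`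
(valid while `|u| ≤ 1`) and `∫ (∂ₓ²u)²` through the bending term, and these two `L²` bounds
control `sup |u|` by an interpolation inequality. For small energy this gives the gap
`sup |u(t,·)| ≤ 1 → sup |u(t,·)| ≤ 1/2`, and a continuity argument in time, started at
`sup |u₀| < 1`, keeps `|u| ≤ 1/2` forever. -/

open MeasureTheory Filter Set intervalIntegral Real

/-- Assumption (A1) on the adhesive potential `Φ` with constant `κ`. -/
structure AdhesivePotential (Φ : ℝ → ℝ) (κ : ℝ) : Prop where
  continuous : Continuous Φ
  smooth : ContDiffOn ℝ 2 Φ ({1, -1} : Set ℝ)ᶜ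
  nonneg : ∀ s, 0 ≤ Φ s
  const_left : ∀ s ≤ (-1 : ℝ), Φ s = Φ (-1)
  const_right : ∀ s ≥ (1 : ℝ), Φ s = Φ 1
  convexOn : ConvexOn ℝ (Set.Icc (-1 : ℝ) 1) Φ
  strictAntiOn : StrictAntiOn Φ (Set.Icc (-1 : ℝ) 0)
  strictMonoOn : StrictMonoOn Φ (Set.Icc (0 : ℝ) 1)
  kappa_pos : 0 < κ
  quad_lower : ∀ s ∈ Set.Icc (-1 : ℝ) 1, κ * s ^ 2 ≤ Φ s

/-- The subdifferential of the (discontinuous) adhesive force `Φ'`: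
`∂Φ'(s) = {Φ'(s)}` if `|s| < 1`, `{0}` if `|s| > 1`, `[0, Φ'(1⁻)]` if `s = 1` and
`[Φ'(-1⁺), 0]` if `s = -1`.  Since `Φ` is convex on `[-1,1]`, its derivative is monotone
there, so the one-sided limits `Φ'(1⁻)` and `Φ'(-1⁺)` coincide with the supremum and the
infimum of `Φ'` over `(-1,1)`, respectively. -/
noncomputable def subdiffForce (Φ : ℝ → ℝ) (s : ℝ) : Set ℝ :=
  if |s| < 1 then {deriv Φ s}
  else if s = 1 then Set.Icc 0 (sSup (deriv Φ '' Set.Ioo (-1 : ℝ) 1))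
  else if s = -1 then Set.Icc (sInf (deriv Φ '' Set.Ioo (-1 : ℝ) 1)) 0
  else {0}

section

variable {f f' : ℝ → ℝ} {a b : ℝ}

lemma exists_mul_le_integral (hab : a ≤ b) (hf : ContinuousOn f (Icc a b)) :
    ∃ p ∈ Icc a b, (b - a) * f p ≤ ∫ x in a..b, f x := by
  obtain ⟨p, hp, hmin⟩ := isCompact_Icc.exists_isMinOn (nonempty_Icc.2 hab) hf
  refine ⟨p, hp, ?_⟩
  calc (b - a) * f p = ∫ _ in a..b, f p := by simp
    _ ≤ ∫ x in a..b, f x :=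
      integral_mono_on hab intervalIntegrable_const (hf.intervalIntegrable_of_Icc hab) hmin

lemma abs_sub_le_integral_abs_deriv (hf : ∀ x ∈ Icc a b, HasDerivAt f (f' x) x)
    (hf' : ContinuousOn f' (Icc a b)) {x y : ℝ} (hx : x ∈ Icc a b) (hy : y ∈ Icc a b) :
    |f y - f x| ≤ ∫ t in a..b, |f' t| := by
  have hab : a ≤ b := hx.1.trans hx.2
  have hsub : uIcc x y ⊆ Icc a b := uIcc_subset_Icc hx hy
  rw [← integral_eq_sub_of_hasDerivAt (fun t ht => hf t (hsub ht))
    ((hf'.mono hsub).intervalIntegrable)]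
  have hIoc : uIoc x y ⊆ Ioc a b := by
    rw [← uIoc_of_le hab]
    exact uIoc_subset_uIoc_of_uIcc_subset_uIcc (by rwa [uIcc_of_le hab])
  calc ‖∫ t in x..y, f' t‖ ≤ ∫ t in uIoc x y, ‖f' t‖ := norm_integral_le_integral_norm_uIoc
    _ ≤ ∫ t in Ioc a b, |f' t| :=
      setIntegral_mono_set (hf'.abs.integrableOn_Icc.mono_set Ioc_subset_Icc_self)
        (ae_of_all _ fun _ => abs_nonneg _) hIoc.eventuallyLE
    _ = ∫ t in a..b, |f' t| := (integral_of_le hab).symm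

lemma integral_abs_le_of_integral_sq_le {c : ℝ} (hab : a ≤ b) (hc : 0 < c)
    (hf : ContinuousOn f (Icc a b)) (hf2 : ∫ x in a..b, f x ^ 2 ≤ (b - a) * c ^ 2) :
    ∫ x in a..b, |f x| ≤ (b - a) * c := by
  -- AM-GM: `2 c |f| ≤ c² + f²`
  have hamgm : ∫ x in a..b, 2 * c * |f x| ≤ ∫ x in a..b, (c ^ 2 + f x ^ 2) :=
    integral_mono_on hab ((hf.abs.const_smul (2 * c)).intervalIntegrable_of_Icc hab)
      ((continuousOn_const.add (hf.pow 2)).intervalIntegrable_of_Icc hab)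
      fun x _ => by nlinarith [sq_nonneg (|f x| - c), sq_abs (f x)]
  have hf2i : IntervalIntegrable (fun x => f x ^ 2) volume a b :=
    (hf.pow 2).intervalIntegrable_of_Icc hab
  rw [intervalIntegral.integral_const_mul, integral_add intervalIntegrable_const hf2i,
    intervalIntegral.integral_const, smul_eq_mul] at hamgm
  nlinarith

end

-- `hv2` and `hh2` say that the root mean squares of `v` and `v''` on `[0, L]` are at most `a`, `b`.
theorem abs_le_of_integral_sq_le {L a b : ℝ} {v g h : ℝ → ℝ} (hL : 0 < L) (ha : 0 ≤ a)
    (hb : 0 < b) (hv : ∀ x ∈ Icc 0 L, HasDerivAt v (g x) x)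
    (hg : ∀ x ∈ Icc 0 L, HasDerivAt g (h x) x) (hh : ContinuousOn h (Icc 0 L))
    (hv2 : ∫ x in 0..L, v x ^ 2 ≤ L * a ^ 2) (hh2 : ∫ x in 0..L, h x ^ 2 ≤ L * b ^ 2)
    {x : ℝ} (hx : x ∈ Icc 0 L) : |v x| ≤ 10 * a + L ^ 2 * b := by
  have hvc : ContinuousOn v (Icc 0 L) := fun y hy => (hv y hy).continuousAt.continuousWithinAt
  -- on every quarter of `[0, L]` the mean square of `v` is at most `4 a²`
  have small_on_quarter : ∀ c, 0 ≤ c → c + L / 4 ≤ L →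
      ∃ p ∈ Icc c (c + L / 4), |v p| ≤ 2 * a := by
    intro c hc hcL
    have hsub : Icc c (c + L / 4) ⊆ Icc 0 L := Icc_subset_Icc hc hcL
    obtain ⟨p, hp, hpv⟩ :=
      exists_mul_le_integral (f := fun y => v y ^ 2) (by linarith) ((hvc.mono hsub).pow 2)
    rw [add_sub_cancel_left] at hpv
    have hmono : ∫ y in c..c + L / 4, v y ^ 2 ≤ ∫ y in 0..L, v y ^ 2 :=
      integral_mono_interval hc (by linarith) hcL (ae_of_all _ fun _ => sq_nonneg _)
        ((hvc.pow 2).intervalIntegrable_of_Icc hL.le)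
    refine ⟨p, hp, abs_le_of_sq_le_sq ?_ (by positivity)⟩
    nlinarith
  obtain ⟨p, hp, hvp⟩ := small_on_quarter 0 le_rfl (by linarith)
  obtain ⟨q, hq, hvq⟩ := small_on_quarter (3 * L / 4) (by positivity) (by linarith)
  have hpL : p ∈ Icc 0 L := ⟨hp.1, by linarith [hp.2]⟩
  have hqL : q ∈ Icc 0 L := ⟨by linarith [hq.1], by linarith [hq.2]⟩
  have hpq : L / 2 ≤ q - p := by linarith [hp.2, hq.1]
  have hpq_sub : Icc p q ⊆ Icc 0 L := Icc_subset_Icc hpL.1 hqL.2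
  obtain ⟨ξ, hξ, hgξ⟩ := exists_hasDerivAt_eq_slope v g (by linarith) (hvc.mono hpq_sub)
    fun y hy => hv y (hpq_sub (Ioo_subset_Icc_self hy))
  have hgξ_le : L * |g ξ| ≤ 8 * a := by
    have hslope : |g ξ| * (q - p) ≤ 4 * a := by
      rw [hgξ, abs_div, abs_of_pos (by linarith : 0 < q - p), div_mul_cancel₀ _ (by linarith)]
      linarith [abs_sub (v q) (v p)]
    nlinarith [abs_nonneg (g ξ)]
  have hg_le : ∀ y ∈ Icc 0 L, L * |g y| ≤ 8 * a + L ^ 2 * b := by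
    intro y hy
    have hvar : |g y - g ξ| ≤ L * b := by
      calc |g y - g ξ| ≤ ∫ t in 0..L, |h t| :=
            abs_sub_le_integral_abs_deriv hg hh (hpq_sub (Ioo_subset_Icc_self hξ)) hy
        _ ≤ (L - 0) * b := integral_abs_le_of_integral_sq_le hL.le hb hh (by simpa using hh2)
        _ = L * b := by ring
    nlinarith [abs_sub_abs_le_abs_sub (g y) (g ξ)]
  have hvar : |v x - v p| ≤ (8 * a / L + L * b) * |x - p| :=
    (convex_Icc 0 L).norm_image_sub_le_of_norm_hasDerivWithin_le
      (fun y hy => (hv y hy).hasDerivWithinAt)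
      (fun y hy => by
        rw [Real.norm_eq_abs, div_add' _ _ _ hL.ne', le_div_iff₀ hL]
        nlinarith [hg_le y hy]) hpL hx
  have hxp : |x - p| ≤ L := abs_sub_le_iff.2 ⟨by linarith [hx.2, hp.1], by linarith [hx.1, hpL.2]⟩
  have hLcoef : (8 * a / L + L * b) * L = 8 * a + L ^ 2 * b := by field_simp
  have hvar_L : |v x - v p| ≤ 8 * a + L ^ 2 * b :=
    hLcoef ▸ hvar.trans (mul_le_mul_of_nonneg_left hxp (by positivity))
  linarith [abs_sub_abs_le_abs_sub (v x) (v p)]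

theorem Continuous.le_of_bootstrap {X Y : Type*} [TopologicalSpace X] [PreconnectedSpace X]
    [TopologicalSpace Y] [CompactSpace Y] {w : X × Y → ℝ} (hw : Continuous w) {a b : ℝ}
    (hab : a < b) (hgap : ∀ t, (∀ y, w (t, y) ≤ b) → ∀ y, w (t, y) ≤ a) {t₀ : X}
    (h₀ : ∀ y, w (t₀, y) ≤ b) (t : X) (y : Y) : w (t, y) ≤ a := by
  set S : Set X := {t | ∀ y, w (t, y) ≤ a}
  have hS_closed : IsClosed S := by
    simp only [S, ofPred_forall]
    exact isClosed_iInter fun y => isClosed_le (hw.comp (Continuous.prodMk_left y)) continuous_const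
  -- the gap makes the complement of `S` the projection of the closed set `{b ≤ w}`
  have hS_compl : Sᶜ = Prod.fst '' {p | b ≤ w p} := by
    ext t
    simp only [S, mem_compl_iff, mem_ofPred_eq, not_forall, not_le, mem_image, Prod.exists,
      exists_and_right, exists_eq_right]
    constructor
    · rintro ⟨y, hy⟩
      by_contra! hlt
      exact (hgap t (fun y' => (hlt y').le) y).not_gt hy
    · rintro ⟨y, hy⟩
      exact ⟨y, by linarith⟩
  have hS_open : IsOpen S := by
    rw [← isClosed_compl_iff, hS_compl]
    exact isClosedMap_fst_of_compactSpace _ (isClosed_le continuous_const hw)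
  have hS : S = univ := IsClopen.eq_univ ⟨hS_closed, hS_open⟩ ⟨t₀, hgap t₀ h₀⟩
  exact (hS ▸ mem_univ t : t ∈ S) y

/-- `E[u](t)`, with `v`, `w`, `h` standing for `u(t,·)`, `∂ₜu(t,·)`, `∂ₓ²u(t,·)`. -/
noncomputable def beamEnergy (ρ μ L : ℝ) (Φ v w h : ℝ → ℝ) : ℝ :=
  ∫ x in 0..L, ((ρ * w x ^ 2 + μ * h x ^ 2) / 2 + Φ (v x))

lemma integral_sq_le_beamEnergy {ρ μ κ L : ℝ} {Φ v w h : ℝ → ℝ} (hL : 0 ≤ L) (hρ : 0 ≤ ρ)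
    (hμ : 0 ≤ μ) (hΦ : AdhesivePotential Φ κ) (hv : ContinuousOn v (Icc 0 L))
    (hw : ContinuousOn w (Icc 0 L)) (hh : ContinuousOn h (Icc 0 L))
    (hv1 : ∀ x ∈ Icc 0 L, |v x| ≤ 1) :
    κ * ∫ x in 0..L, v x ^ 2 ≤ beamEnergy ρ μ L Φ v w h ∧
      μ / 2 * ∫ x in 0..L, h x ^ 2 ≤ beamEnergy ρ μ L Φ v w h := by
  have hE : IntervalIntegrable (fun x => (ρ * w x ^ 2 + μ * h x ^ 2) / 2 + Φ (v x)) volume 0 L :=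
    ((((hw.pow 2).const_smul ρ).add ((hh.pow 2).const_smul μ)).div_const 2
      |>.add (hΦ.continuous.comp_continuousOn hv)).intervalIntegrable_of_Icc hL
  have hρw : ∀ x, 0 ≤ ρ * w x ^ 2 := fun x => by positivity
  have hμh : ∀ x, 0 ≤ μ * h x ^ 2 := fun x => by positivity
  rw [← intervalIntegral.integral_const_mul, ← intervalIntegral.integral_const_mul]
  constructor
  · refine integral_mono_on hL (((hv.pow 2).const_smul κ).intervalIntegrable_of_Icc hL) hE
      fun x hx => ?_
    have := hΦ.quad_lower (v x) (abs_le.1 (hv1 x hx))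
    linarith [hρw x, hμh x]
  · refine integral_mono_on hL (((hh.pow 2).const_smul (μ / 2)).intervalIntegrable_of_Icc hL) hE
      fun x _ => ?_
    linarith [hρw x, hΦ.nonneg (v x)]

-- The energy threshold makes `a = 1/40`, `b = 1/(4L²)` admissible in `abs_le_of_integral_sq_le`.
lemma abs_le_half_of_beamEnergy_lt {ρ μ κ L : ℝ} {Φ v g h w : ℝ → ℝ} (hL : 0 < L) (hρ : 0 ≤ ρ)
    (hμ : 0 < μ) (hκ : 0 < κ) (hΦ : AdhesivePotential Φ κ)
    (hv : ∀ x ∈ Icc 0 L, HasDerivAt v (g x) x) (hg : ∀ x ∈ Icc 0 L, HasDerivAt g (h x) x)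
    (hw : ContinuousOn w (Icc 0 L)) (hh : ContinuousOn h (Icc 0 L))
    (hv1 : ∀ x ∈ Icc 0 L, |v x| ≤ 1)
    (hE : beamEnergy ρ μ L Φ v w h < min (κ * L / 1600) (μ / (32 * L ^ 3)))
    {x : ℝ} (hx : x ∈ Icc 0 L) : |v x| ≤ 1 / 2 := by
  have hvc : ContinuousOn v (Icc 0 L) := fun y hy => (hv y hy).continuousAt.continuousWithinAt
  obtain ⟨hv2, hh2⟩ := integral_sq_le_beamEnergy hL.le hρ hμ.le hΦ hvc hw hh hv1
  have hb : L * (1 / (4 * L ^ 2)) ^ 2 = 1 / (16 * L ^ 3) := by field_simp; ring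
  have hcoef : 10 * (1 / 40) + L ^ 2 * (1 / (4 * L ^ 2)) = (1 / 2 : ℝ) := by field_simp; norm_num
  refine hcoef ▸ abs_le_of_integral_sq_le hL (by norm_num) (by positivity) hv hg hh ?_ ?_ hx
  · refine le_of_mul_le_mul_left ?_ hκ
    linarith [min_le_left (κ * L / 1600) (μ / (32 * L ^ 3))]
  · refine hb ▸ le_of_mul_le_mul_left ?_ (half_pos hμ)
    have : μ / 2 * (1 / (16 * L ^ 3)) = μ / (32 * L ^ 3) := by field_simp; ring
    linarith [min_le_right (κ * L / 1600) (μ / (32 * L ^ 3))]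

theorem adhesive_states
    (L μ κ : ℝ) (hL : 0 < L) (hμ : 0 < μ) (hκ : 0 < κ) :
    ∃ ε₀ > (0:ℝ),
      ∀ (ρ : ℝ), 0 < ρ →
      ∀ (Φ : ℝ → ℝ), AdhesivePotential Φ κ →
      ∀ (u ut ux uxx : ℝ → ℝ → ℝ),
      -- u is continuous on [0,∞) × [0,L]
      ContinuousOn (fun p : ℝ × ℝ => u p.1 p.2) (Ici 0 ×ˢ Icc 0 L) →
      -- ∂ₜu exists and is continuous on [0,∞) × [0,L]
      (∀ x ∈ Icc 0 L, ∀ t ∈ Ici (0:ℝ), HasDerivAt (fun τ => u τ x) (ut t x) t) →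
      ContinuousOn (fun p : ℝ × ℝ => ut p.1 p.2) (Ici 0 ×ˢ Icc 0 L) →
      -- ∂ₓ²u exists and is continuous on [0,∞) × [0,L]
      (∀ t ∈ Ici (0:ℝ), ∀ x ∈ Icc 0 L, HasDerivAt (fun y => u t y) (ux t x) x) →
      (∀ t ∈ Ici (0:ℝ), ∀ x ∈ Icc 0 L, HasDerivAt (fun y => ux t y) (uxx t x) x) →
      ContinuousOn (fun p : ℝ × ℝ => uxx p.1 p.2) (Ici 0 ×ˢ Icc 0 L) →
      -- `sup_{[0,L]} |u(0,·)| < 1`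
      (∃ m < (1:ℝ), ∀ x ∈ Icc 0 L, |u 0 x| ≤ m) →
      -- energy dissipation: E[u](t) ≤ E[u](0) for every t ≥ 0
      (∀ t ∈ Ici (0:ℝ),
        (∫ x in (0:ℝ)..L, ((ρ * (ut t x) ^ 2 + μ * (uxx t x) ^ 2) / 2 + Φ (u t x)))
          ≤ ∫ x in (0:ℝ)..L, ((ρ * (ut 0 x) ^ 2 + μ * (uxx 0 x) ^ 2) / 2 + Φ (u 0 x))) →
      -- small initial energy: E[u](0) < ε₀
      (∫ x in (0:ℝ)..L, ((ρ * (ut 0 x) ^ 2 + μ * (uxx 0 x) ^ 2) / 2 + Φ (u 0 x))) < ε₀ →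
      -- conclusion: `sup_{[0,∞) × [0,L]} |u| < 1`, the beam never detaches
      ∃ M < (1:ℝ), ∀ t ∈ Ici (0:ℝ), ∀ x ∈ Icc 0 L, |u t x| ≤ M := by
  refine ⟨min (κ * L / 1600) (μ / (32 * L ^ 3)), by positivity, ?_⟩
  intro ρ hρ Φ hΦ u ut ux uxx hu _ hutc huxd huxxd huxxc ⟨m, hm1, hm⟩ hdiss hsmall
  have half_of_le_one : ∀ t ∈ Ici (0:ℝ), (∀ x ∈ Icc 0 L, |u t x| ≤ 1) →
      ∀ x ∈ Icc 0 L, |u t x| ≤ 1 / 2 := fun t ht hle _ hx =>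
    abs_le_half_of_beamEnergy_lt hL hρ.le hμ hκ hΦ (huxd t ht) (huxxd t ht)
      (hutc.uncurry_left t ht) (huxxc.uncurry_left t ht) hle ((hdiss t ht).trans_lt hsmall) hx
  have : PreconnectedSpace (Ici (0:ℝ)) := isPreconnected_iff_preconnectedSpace.1 isPreconnected_Ici
  have hw : Continuous fun p : Ici (0:ℝ) × Icc 0 L => |u p.1 p.2| :=
    (hu.comp_continuous (f := fun p : Ici (0:ℝ) × Icc 0 L => ((p.1 : ℝ), (p.2 : ℝ)))
      (by fun_prop) fun p => ⟨p.1.2, p.2.2⟩).abs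
  refine ⟨1 / 2, by norm_num, fun t ht x hx => ?_⟩
  exact hw.le_of_bootstrap (by norm_num : (1 / 2 : ℝ) < 1)
    (fun s hs y => half_of_le_one s s.2 (fun x hx => hs ⟨x, hx⟩) y y.2)
    (t₀ := ⟨0, self_mem_Ici⟩) (fun y => (hm y y.2).trans hm1.le) ⟨t, ht⟩ ⟨x, hx⟩
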